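/- arXiv:2307.11919 — 7 statements merged into one kernel-verified Lean document; each statement's English description precedes it below -/
import Mathlib

section
/- Let U : ℝ → ℝ be concave, nondecreasing, non-constant and continuously differentiable, and assume lim_{x→+∞} U(x) > 0 (equivalently, since U is nondecreasing, U(x₀) > 0 for some x₀ ∈ ℝ). Then AE₊(U) ≤ 1 and AE₋(U) ≥ 1, i.e. limsup_{x→+∞} x·U'(x)/U(x) ≤ 1 and liminf_{x→−∞} x·U'(x)/U(x) ≥ 1, the limsup and liminf being taken in EReal. -/
/-! The tangent-line inequality `U'(x) (x - c) ≤ U(x) - U(c)` of a concave differentiable function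
gives `x U'(x) / U(x) ≤ x / (x - c)` for large `x`, where `U(x) ≥ U(c) > 0`, and
`x U'(x) / U(x) ≥ x / (x - c) · (1 - U(c) / U(x))` for very negative `x`, where `U(x) → -∞`
because a non-constant nondecreasing concave function decays at least linearly to the left.
Both bounds tend to `1`. -/

open Filter Set

/-- Asymptotic elasticity at `+∞`: `limsup_{x→+∞} x·U'(x)/U(x)`, taken in `EReal`
(the real ratio uses the convention that division by `0` gives `0`). -/
noncomputable def AEplus (U : ℝ → ℝ) : EReal :=
  Filter.limsup (fun x : ℝ => ((x * deriv U x / U x : ℝ) : EReal)) Filter.atTop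

/-- Asymptotic elasticity at `-∞`: `liminf_{x→−∞} x·U'(x)/U(x)`, taken in `EReal`. -/
noncomputable def AEminus (U : ℝ → ℝ) : EReal :=
  Filter.liminf (fun x : ℝ => ((x * deriv U x / U x : ℝ) : EReal)) Filter.atBot

open Topology

lemma ConcaveOn.deriv_mul_sub_le {S : Set ℝ} {U : ℝ → ℝ} {x c : ℝ}
    (hU : ConcaveOn ℝ S U) (hx : x ∈ S) (hc : c ∈ S) (hd : DifferentiableAt ℝ U x) :
    deriv U x * (x - c) ≤ U x - U c := by
  rcases lt_trichotomy c x with hcx | rfl | hxc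
  · have h := hU.deriv_le_slope hc hx hcx hd
    rwa [slope_def_field, le_div_iff₀ (sub_pos.2 hcx)] at h
  · simp
  · have h := hU.slope_le_deriv hx hc hxc hd
    rw [slope_def_field, div_le_iff₀ (sub_pos.2 hxc)] at h
    linarith

lemma ConcaveOn.tendsto_atBot_atBot_of_lt {U : ℝ → ℝ} (hU : ConcaveOn ℝ univ U) {p q : ℝ}
    (hpq : p < q) (hUpq : U p < U q) : Tendsto U atBot atBot := by
  set s := (U q - U p) / (q - p)
  have hs : 0 < s := div_pos (sub_pos.2 hUpq) (sub_pos.2 hpq)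
  have hline : Tendsto (fun x => U p + s * (x - p)) atBot atBot :=
    tendsto_atBot_add_const_left _ _ <|
      (tendsto_atBot_add_const_right _ _ tendsto_id).const_mul_atBot hs
  refine tendsto_atBot_mono' atBot ?_ hline
  -- to the left of `p`, concavity keeps `U` below the chord line through `p` and `q`
  filter_upwards [eventually_lt_atBot p] with x hxp
  have hslope := hU.slope_anti_adjacent (mem_univ x) (mem_univ q) hxp hpq
  rw [le_div_iff₀ (sub_pos.2 hxp)] at hslope
  linarith

lemma tendsto_div_sub_const_cobounded (c : ℝ) :
    Tendsto (fun x : ℝ => x / (x - c)) (Bornology.cobounded ℝ) (𝓝 1) := by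
  have h : Tendsto (fun x : ℝ => 1 + c * (x - c)⁻¹) (Bornology.cobounded ℝ) (𝓝 1) := by
    simpa using (tendsto_inv₀_cobounded.comp (tendsto_sub_const_cobounded c)).const_mul c
      |>.const_add 1
  refine h.congr' ?_
  filter_upwards [(tendsto_sub_const_cobounded c).eventually_ne_cobounded 0] with x hx
  field_simp
  ring

lemma EReal.limsup_coe_le_of_eventuallyLE {α : Type*} {l : Filter α} [l.NeBot] {f g : α → ℝ}
    {a : ℝ} (hfg : f ≤ᶠ[l] g) (hg : Tendsto g l (𝓝 a)) :
    limsup (fun x => (f x : EReal)) l ≤ a :=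
  (limsup_le_limsup (hfg.mono fun _ h => EReal.coe_le_coe h)).trans_eq
    ((continuous_coe_real_ereal.tendsto a).comp hg).limsup_eq

lemma EReal.le_liminf_coe_of_eventuallyLE {α : Type*} {l : Filter α} [l.NeBot] {f g : α → ℝ}
    {a : ℝ} (hgf : g ≤ᶠ[l] f) (hg : Tendsto g l (𝓝 a)) :
    (a : EReal) ≤ liminf (fun x => (f x : EReal)) l :=
  ((continuous_coe_real_ereal.tendsto a).comp hg).liminf_eq.symm.trans_le
    (liminf_le_liminf (hgf.mono fun _ h => EReal.coe_le_coe h))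

lemma ConcaveOn.eventually_elasticity_le {U : ℝ → ℝ} (hU : ConcaveOn ℝ univ U)
    (hd : Differentiable ℝ U) (hmono : Monotone U) {c : ℝ} (hc : 0 < U c) :
    ∀ᶠ x in atTop, x * deriv U x / U x ≤ x / (x - c) := by
  filter_upwards [eventually_gt_atTop (max c 0)] with x hx
  obtain ⟨hcx, hx0⟩ := max_lt_iff.1 hx
  have hxc : 0 < x - c := sub_pos.2 hcx
  have hUx : 0 < U x := hc.trans_le (hmono hcx.le)
  have hfactor : 0 ≤ x / ((x - c) * U x) := by positivity
  calc x * deriv U x / U x = x / ((x - c) * U x) * (deriv U x * (x - c)) := by field_simp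
    _ ≤ x / ((x - c) * U x) * (U x - U c) :=
      mul_le_mul_of_nonneg_left (hU.deriv_mul_sub_le (mem_univ x) (mem_univ c) (hd x)) hfactor
    _ ≤ x / ((x - c) * U x) * U x := by gcongr; linarith
    _ = x / (x - c) := by field_simp

lemma ConcaveOn.eventually_le_elasticity {U : ℝ → ℝ} (hU : ConcaveOn ℝ univ U)
    (hd : Differentiable ℝ U) (hUbot : Tendsto U atBot atBot) (c : ℝ) :
    ∀ᶠ x in atBot, x / (x - c) * (1 - U c / U x) ≤ x * deriv U x / U x := by
  filter_upwards [eventually_lt_atBot (min c 0), hUbot.eventually (eventually_lt_atBot 0)]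
    with x hx hUx
  obtain ⟨hxc, hx0⟩ := lt_min_iff.1 hx
  replace hxc : x - c < 0 := sub_neg.2 hxc
  have hfactor : x / ((x - c) * U x) ≤ 0 :=
    div_nonpos_of_nonpos_of_nonneg hx0.le (mul_pos_of_neg_of_neg hxc hUx).le
  calc x / (x - c) * (1 - U c / U x) = x / ((x - c) * U x) * (U x - U c) := by
        field_simp [hxc.ne, hUx.ne]
    _ ≤ x / ((x - c) * U x) * (deriv U x * (x - c)) :=
      mul_le_mul_of_nonpos_left (hU.deriv_mul_sub_le (mem_univ x) (mem_univ c) (hd x)) hfactor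
    _ = x * deriv U x / U x := by field_simp [hxc.ne]

/-- If `U : ℝ → ℝ` is concave, nondecreasing, non-constant and
continuously differentiable with `lim_{x→+∞} U x > 0` (equivalently `U x₀ > 0` for some `x₀`),
then `AE₊(U) ≤ 1` and `AE₋(U) ≥ 1`. -/
theorem AE_bounds (U : ℝ → ℝ) (hconc : ConcaveOn ℝ Set.univ U) (hmono : Monotone U)
    (hnonconst : ∃ a b : ℝ, U a ≠ U b) (hC1 : ContDiff ℝ 1 U)
    (hpos : ∃ x₀ : ℝ, 0 < U x₀) :
    AEplus U ≤ 1 ∧ 1 ≤ AEminus U := by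
  obtain ⟨c, hc⟩ := hpos
  have hd : Differentiable ℝ U := hC1.differentiable one_ne_zero
  have hUbot : Tendsto U atBot atBot := by
    obtain ⟨a, b, hab⟩ := hnonconst
    rcases hab.lt_or_gt with h | h
    · exact hconc.tendsto_atBot_atBot_of_lt (hmono.reflect_lt h) h
    · exact hconc.tendsto_atBot_atBot_of_lt (hmono.reflect_lt h) h
  have hratio := tendsto_div_sub_const_cobounded c
  constructor
  · exact_mod_cast EReal.limsup_coe_le_of_eventuallyLE
      (hconc.eventually_elasticity_le hd hmono hc)
      (hratio.mono_left IsOrderBornology.atTop_le_cobounded)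
  · have hlower : Tendsto (fun x => x / (x - c) * (1 - U c / U x)) atBot (𝓝 1) := by
      simpa using (hratio.mono_left IsOrderBornology.atBot_le_cobounded).mul
        (tendsto_const_nhds.sub (tendsto_const_nhds.div_atBot hUbot))
    exact_mod_cast EReal.le_liminf_coe_of_eventuallyLE
      (hconc.eventually_le_elasticity hd hUbot c) hlower
end

section
/- Let U : ℝ → ℝ be concave, nondecreasing, non-constant and continuously differentiable. Let γ > 1 and let x̄ < 0 be such that U(x̄) < 0 and x·U'(x)/U(x) > γ for every x ≤ x̄. Then for every x ≤ x̄ and every real λ ≥ 1 one has U(λ·x) ≤ λ^γ · U(x), with strict inequality whenever λ > 1. -/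
open Set

/-!
As `U` is nondecreasing, `U < 0` on `(-∞, x̄]`, so the hypothesis on the elasticity reads
`y U'(y) < γ U(y)` there. For `g λ = U (λ x)` this says `λ g'(λ) < γ g(λ)` on `[1, ∞)`, so
`λ ↦ λ^{-γ} g(λ)` has negative derivative and is strictly decreasing there; comparing its
values at `λ` and `1` gives `U (λ x) < λ^γ U x`.
-/

theorem strictAntiOn_rpow_neg_mul_of_mul_deriv_lt {g g' : ℝ → ℝ} {γ a : ℝ} (ha : 0 < a)
    (hg : ∀ l ∈ Ici a, HasDerivAt g (g' l) l) (hlt : ∀ l ∈ Ici a, l * g' l < γ * g l) :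
    StrictAntiOn (fun l => l ^ (-γ) * g l) (Ici a) := by
  have hderiv : ∀ l ∈ Ici a, HasDerivAt (fun l => l ^ (-γ) * g l)
      (-γ * l ^ (-γ - 1) * g l + l ^ (-γ) * g' l) l := fun l hl =>
    ((Real.hasDerivAt_rpow_const (Or.inl (ha.trans_le hl).ne')).mul (hg l hl))
  refine strictAntiOn_of_hasDerivWithinAt_neg (convex_Ici a)
    (fun l hl => (hderiv l hl).continuousAt.continuousWithinAt)
    (fun l hl => (hderiv l (interior_subset hl)).hasDerivWithinAt) fun l hl => ?_
  have hl : a < l := by simpa using hl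
  have hl0 : 0 < l := ha.trans hl
  have hsplit : l ^ (-γ) = l ^ (-γ - 1) * l := by
    rw [← Real.rpow_add_one hl0.ne']; ring_nf
  calc -γ * l ^ (-γ - 1) * g l + l ^ (-γ) * g' l
      = l ^ (-γ - 1) * (l * g' l - γ * g l) := by rw [hsplit]; ring
    _ < 0 := mul_neg_of_pos_of_neg (Real.rpow_pos_of_pos hl0 _)
        (sub_neg.mpr (hlt l (le_of_lt hl)))

theorem lt_rpow_mul_of_mul_deriv_lt {g g' : ℝ → ℝ} {γ lam : ℝ}
    (hg : ∀ l ∈ Ici 1, HasDerivAt g (g' l) l) (hlt : ∀ l ∈ Ici 1, l * g' l < γ * g l)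
    (hlam : 1 < lam) : g lam < lam ^ γ * g 1 := by
  have hlam0 : 0 < lam := one_pos.trans hlam
  have hanti := strictAntiOn_rpow_neg_mul_of_mul_deriv_lt one_pos hg hlt
    (self_mem_Ici : (1 : ℝ) ∈ Ici 1) hlam.le hlam
  simp only [Real.one_rpow, one_mul] at hanti
  calc g lam = lam ^ γ * (lam ^ (-γ) * g lam) := by
        rw [← mul_assoc, ← Real.rpow_add hlam0, add_neg_cancel, Real.rpow_zero, one_mul]
    _ < lam ^ γ * g 1 := mul_lt_mul_of_pos_left hanti (Real.rpow_pos_of_pos hlam0 _)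

theorem growth_below_threshold_general (U : ℝ → ℝ)
    (hmono : Monotone U) (hC1 : ContDiff ℝ 1 U)
    (γ : ℝ) (xbar : ℝ) (hxbar : xbar < 0) (hUxbar : U xbar < 0)
    (hratio : ∀ x ≤ xbar, γ < x * deriv U x / U x) :
    ∀ x ≤ xbar, ∀ lam : ℝ, 1 ≤ lam →
      U (lam * x) ≤ lam ^ γ * U x ∧ (1 < lam → U (lam * x) < lam ^ γ * U x) := by
  intro x hx lam hlam
  have hx0 : x < 0 := hx.trans_lt hxbar
  have hscaled : ∀ l ∈ Ici (1 : ℝ), l * x ≤ xbar := fun l hl =>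
    le_trans (by nlinarith [mem_Ici.mp hl]) hx
  have hderiv : ∀ l ∈ Ici (1 : ℝ), HasDerivAt (fun l => U (l * x)) (deriv U (l * x) * x) l :=
    fun l _ => ((hC1.differentiable one_ne_zero) (l * x)).hasDerivAt.comp l (hasDerivAt_mul_const x)
  have hlt : ∀ l ∈ Ici (1 : ℝ), l * (deriv U (l * x) * x) < γ * U (l * x) := fun l hl => by
    have hneg : U (l * x) < 0 := (hmono (hscaled l hl)).trans_lt hUxbar
    have := (lt_div_iff_of_neg hneg).mp (hratio _ (hscaled l hl))
    linarith
  have hstrict (h1 : 1 < lam) : U (lam * x) < lam ^ γ * U x := by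
    simpa using lt_rpow_mul_of_mul_deriv_lt hderiv hlt h1
  refine ⟨?_, hstrict⟩
  rcases hlam.eq_or_lt with rfl | h1
  · simp
  · exact (hstrict h1).le

/-- Let `U : ℝ → ℝ` be concave, nondecreasing, non-constant and continuously
differentiable, `γ > 1`, and `x̄ < 0` with `U x̄ < 0` and `x·U'(x)/U(x) > γ` for all `x ≤ x̄`.
Then `U (λ·x) ≤ λ^γ · U x` for all `x ≤ x̄` and real `λ ≥ 1`, with strict inequality
whenever `λ > 1`. -/
theorem growth_below_threshold (U : ℝ → ℝ) (hconc : ConcaveOn ℝ Set.univ U)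
    (hmono : Monotone U) (hnonconst : ∃ a b : ℝ, U a ≠ U b) (hC1 : ContDiff ℝ 1 U)
    (γ : ℝ) (hγ : 1 < γ) (xbar : ℝ) (hxbar : xbar < 0) (hUxbar : U xbar < 0)
    (hratio : ∀ x ≤ xbar, γ < x * deriv U x / U x) :
    ∀ x ≤ xbar, ∀ lam : ℝ, 1 ≤ lam →
      U (lam * x) ≤ lam ^ γ * U x ∧ (1 < lam → U (lam * x) < lam ^ γ * U x) :=
  growth_below_threshold_general U hmono hC1 γ xbar hxbar hUxbar hratio
end

section
/- Let U : ℝ → ℝ be concave, nondecreasing, non-constant and continuously differentiable, assume AE₋(U) > 1, and let γ be a real number with 1 < γ and (γ : EReal) < AE₋(U). Then there exists x̄ < 0 such that U(x̄) < 0 and x·U'(x)/U(x) > γ for every x ≤ x̄; moreover, for any such x̄, setting C := U(0)⁺ + U(0)⁻ + U(x̄)⁻ (so C > 0), one has U(λ·x) ≤ λ^γ · (U(x) + C) for every real λ ≥ 1 and every x ∈ ℝ. -/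
/-!
Since the liminf exceeds `γ`, the ratio `x U'(x) / U(x)` exceeds `γ` on some `(-∞, x̄]`; there
`x U'(x) ≤ 0`, so `U(x̄) < 0`. For `x ≤ x̄` the ratio bound is exactly the statement that
`t ↦ U(t x) t^(-γ)` has nonpositive derivative on `[1, ∞)`, whence `U(λx) ≤ λ^γ U(x)`.
For `x > x̄`, concavity between `0` and `λx` gives `U(λx) ≤ λ U(x) - (λ - 1) U(0) ≤ λ (U(x) + C)`,
and `U(x) + C ≥ U(x̄) + C ≥ 0` lets `λ` be replaced by `λ^γ`.
-/

open Filter Set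

lemma exists_forall_le_lt_elasticity_of_lt_AEminus {U : ℝ → ℝ} {γ : ℝ}
    (hγ : (γ : EReal) < AEminus U) : ∃ a, ∀ x ≤ a, γ < x * deriv U x / U x := by
  obtain ⟨a, ha⟩ := eventually_atBot.mp (eventually_lt_of_lt_liminf hγ)
  exact ⟨a, fun x hx => EReal.coe_lt_coe_iff.mp (ha x hx)⟩

lemma neg_of_pos_lt_elasticity {U : ℝ → ℝ} (hmono : Monotone U) {γ x : ℝ} (hγ : 0 < γ)
    (hx : x < 0) (hrat : γ < x * deriv U x / U x) : U x < 0 := by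
  by_contra! hUx
  have : x * deriv U x / U x ≤ 0 :=
    div_nonpos_of_nonpos_of_nonneg (mul_nonpos_of_nonpos_of_nonneg hx.le hmono.deriv_nonneg) hUx
  linarith

lemma apply_mul_le_rpow_mul_of_lt_elasticity {U : ℝ → ℝ} (hdiff : Differentiable ℝ U)
    (hmono : Monotone U) {γ xbar : ℝ} (hxbar : xbar < 0) (hUxbar : U xbar < 0)
    (hrat : ∀ x ≤ xbar, γ < x * deriv U x / U x) {x lam : ℝ} (hx : x ≤ xbar) (hlam : 1 ≤ lam) :
    U (lam * x) ≤ lam ^ γ * U x := by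
  set f : ℝ → ℝ := fun t => U (t * x) * t ^ (-γ)
  set f' : ℝ → ℝ := fun t => deriv U (t * x) * x * t ^ (-γ) + U (t * x) * (-γ * t ^ (-γ - 1))
  have hf : ∀ t, 0 < t → HasDerivAt f (f' t) t := fun t ht =>
    ((hdiff (t * x)).hasDerivAt.comp t (hasDerivAt_mul_const x)).mul
      (Real.hasDerivAt_rpow_const (Or.inl ht.ne'))
  have hf'_nonpos : ∀ t ∈ interior (Ici (1 : ℝ)), f' t ≤ 0 := by
    intro t ht
    rw [interior_Ici, mem_Ioi] at ht
    have ht0 : 0 < t := one_pos.trans ht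
    have hty : t * x ≤ xbar := by nlinarith
    have hU : U (t * x) < 0 := (hmono hty).trans_lt hUxbar
    have hlt : t * x * deriv U (t * x) < γ * U (t * x) := (lt_div_iff_of_neg hU).mp (hrat _ hty)
    have hpow : t ^ (-γ) = t ^ (-γ - 1) * t := by
      rw [← Real.rpow_add_one ht0.ne']; ring_nf
    have hp : 0 < t ^ (-γ - 1) := Real.rpow_pos_of_pos ht0 _
    simp only [f', hpow]
    nlinarith [mul_pos hp (sub_pos.mpr hlt)]
  have hanti : AntitoneOn f (Ici 1) :=
    antitoneOn_of_hasDerivWithinAt_nonpos (convex_Ici 1)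
      (fun t ht => (hf t (one_pos.trans_le ht)).continuousAt.continuousWithinAt)
      (fun t ht => (hf t (one_pos.trans_le (interior_subset ht))).hasDerivWithinAt) hf'_nonpos
  have hlam0 : 0 < lam := one_pos.trans_le hlam
  have h := hanti self_mem_Ici hlam hlam
  simp only [f, one_mul, Real.one_rpow, mul_one, Real.rpow_neg hlam0.le] at h
  rwa [← div_eq_mul_inv, div_le_iff₀ (Real.rpow_pos_of_pos hlam0 γ), mul_comm (U x)] at h

lemma ConcaveOn.apply_mul_le_of_one_le {U : ℝ → ℝ} (hU : ConcaveOn ℝ univ U) {lam : ℝ}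
    (hlam : 1 ≤ lam) (x : ℝ) : U (lam * x) ≤ lam * U x - (lam - 1) * U 0 := by
  have hlam0 : 0 < lam := one_pos.trans_le hlam
  have h := hU.2 (mem_univ (lam * x)) (mem_univ 0) (inv_nonneg.mpr hlam0.le)
    (sub_nonneg.mpr (inv_le_one_of_one_le₀ hlam)) (add_sub_cancel _ _)
  simp only [smul_eq_mul, mul_zero, add_zero, inv_mul_cancel_left₀ hlam0.ne'] at h
  have hscaled := mul_le_mul_of_nonneg_left h hlam0.le
  have hweight : lam * ((1 - lam⁻¹) * U 0) = (lam - 1) * U 0 := by field_simp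
  rw [mul_add, mul_inv_cancel_left₀ hlam0.ne', hweight] at hscaled
  linarith

lemma apply_mul_le_rpow_mul_add_of_lt_elasticity {U : ℝ → ℝ} (hconc : ConcaveOn ℝ univ U)
    (hmono : Monotone U) (hdiff : Differentiable ℝ U) {γ xbar C : ℝ} (hγ : 1 ≤ γ)
    (hxbar : xbar < 0) (hUxbar : U xbar < 0) (hrat : ∀ x ≤ xbar, γ < x * deriv U x / U x)
    (hCU0 : -U 0 ≤ C) (hCxbar : -U xbar ≤ C) {lam : ℝ} (hlam : 1 ≤ lam) (x : ℝ) :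
    U (lam * x) ≤ lam ^ γ * (U x + C) := by
  rcases le_or_gt x xbar with hx | hx
  · calc U (lam * x) ≤ lam ^ γ * U x :=
          apply_mul_le_rpow_mul_of_lt_elasticity hdiff hmono hxbar hUxbar hrat hx hlam
      _ ≤ lam ^ γ * (U x + C) := by gcongr; linarith
  · have hUxC : 0 ≤ U x + C := by linarith [hmono hx.le]
    have hlam_le : lam ≤ lam ^ γ := by
      simpa using Real.rpow_le_rpow_of_exponent_le hlam hγ
    calc U (lam * x) ≤ lam * U x - (lam - 1) * U 0 := hconc.apply_mul_le_of_one_le hlam x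
      _ ≤ lam * (U x + C) := by nlinarith
      _ ≤ lam ^ γ * (U x + C) := by gcongr

theorem AE_minus_growth_general (U : ℝ → ℝ) (hconc : ConcaveOn ℝ Set.univ U) (hmono : Monotone U)
    (hC1 : ContDiff ℝ 1 U) (γ : ℝ) (hγ1 : 1 < γ) (hγ2 : (γ : EReal) < AEminus U) :
    (∃ xbar : ℝ, xbar < 0 ∧ U xbar < 0 ∧ ∀ x ≤ xbar, γ < x * deriv U x / U x) ∧
    (∀ xbar : ℝ, xbar < 0 → U xbar < 0 → (∀ x ≤ xbar, γ < x * deriv U x / U x) →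
      0 < max (U 0) 0 + max (-U 0) 0 + max (-U xbar) 0 ∧
      ∀ lam : ℝ, 1 ≤ lam → ∀ x : ℝ,
        U (lam * x) ≤ lam ^ γ * (U x + (max (U 0) 0 + max (-U 0) 0 + max (-U xbar) 0))) := by
  obtain ⟨a, ha⟩ := exists_forall_le_lt_elasticity_of_lt_AEminus hγ2
  refine ⟨⟨min a (-1), by simp, ?_, fun x hx => ha x (hx.trans (min_le_left _ _))⟩, ?_⟩
  · exact neg_of_pos_lt_elasticity hmono (one_pos.trans hγ1) (by simp) (ha _ (min_le_left _ _))
  intro xbar hxbar hUxbar hrat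
  set C := max (U 0) 0 + max (-U 0) 0 + max (-U xbar) 0
  have hCU0 : -U 0 ≤ C := by
    linarith [le_max_right (U 0) 0, le_max_left (-U 0) 0, le_max_right (-U xbar) 0]
  have hCxbar : -U xbar ≤ C := by
    linarith [le_max_right (U 0) 0, le_max_right (-U 0) 0, le_max_left (-U xbar) 0]
  exact ⟨by linarith, fun lam hlam x => apply_mul_le_rpow_mul_add_of_lt_elasticity hconc hmono
    (hC1.differentiable one_ne_zero) hγ1.le hxbar hUxbar hrat hCU0 hCxbar hlam x⟩

/-- Let `U : ℝ → ℝ` be concave, nondecreasing, non-constant and continuously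
differentiable with `AE₋(U) > 1`, and let `γ` satisfy `1 < γ` and `(γ : EReal) < AE₋(U)`.
Then there is `x̄ < 0` with `U x̄ < 0` and `x·U'(x)/U(x) > γ` for all `x ≤ x̄`; and for any
such `x̄`, with `C := (U 0)⁺ + (U 0)⁻ + (U x̄)⁻` one has `C > 0` and
`U (λ·x) ≤ λ^γ · (U x + C)` for every `λ ≥ 1` and every `x`. -/
theorem AE_minus_growth (U : ℝ → ℝ) (hconc : ConcaveOn ℝ Set.univ U) (hmono : Monotone U)
    (hnonconst : ∃ a b : ℝ, U a ≠ U b) (hC1 : ContDiff ℝ 1 U)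
    (hAE : 1 < AEminus U) (γ : ℝ) (hγ1 : 1 < γ) (hγ2 : (γ : EReal) < AEminus U) :
    (∃ xbar : ℝ, xbar < 0 ∧ U xbar < 0 ∧ ∀ x ≤ xbar, γ < x * deriv U x / U x) ∧
    (∀ xbar : ℝ, xbar < 0 → U xbar < 0 → (∀ x ≤ xbar, γ < x * deriv U x / U x) →
      0 < max (U 0) 0 + max (-U 0) 0 + max (-U xbar) 0 ∧
      ∀ lam : ℝ, 1 ≤ lam → ∀ x : ℝ,
        U (lam * x) ≤ lam ^ γ * (U x + (max (U 0) 0 + max (-U 0) 0 + max (-U xbar) 0))) :=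
  AE_minus_growth_general U hconc hmono hC1 γ hγ1 hγ2
end

section
/- Let U : ℝ → ℝ be concave, nondecreasing, non-constant and continuously differentiable, assume AE₊(U) < 1 and lim_{x→+∞} U(x) > 0 (equivalently U(x₀) > 0 for some x₀), and let γ be a real number with γ < 1 and AE₊(U) < (γ : EReal). Then there exist x' < 0 and x̄ > 0 such that U(x') < 0, U(x̄) > 0 and x·U'(x)/U(x) < γ for every x ≥ x̄; moreover, for any such x' and x̄, setting C := U(x̄)⁺ + U(x')⁻ + U(0)⁻, one has U(λ·x) ≤ λ^γ · (U(x) + C) for every real λ ≥ 1 and every x ∈ ℝ. -/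
open Filter Set

/-! A concave `U` that increases somewhere lies, far to the left, below a line of positive slope,
so it is negative near `-∞`; `x̄` comes from the limsup. For the growth bound there are three
regimes. On `[x̄, ∞)` the elasticity bound `y U' y ≤ γ U y` makes `y ↦ y^(-γ) U y` nonincreasing,
whence `U (λx) ≤ λ^γ U x`. Below `x̄` with `U x + (U 0)⁻ > 0`, monotonicity reduces to `x = x̄`.
Where `U x + (U 0)⁻ ≤ 0`, the concave function `U + (U 0)⁻` is nonnegative at `0`, hence
`U (λx) ≤ λ (U x + (U 0)⁻) ≤ λ^γ (U x + (U 0)⁻)`, the last step because `λ^γ ≤ λ` and the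
factor is nonpositive. -/

theorem ConcaveOn.tendsto_atBot_atBot {U : ℝ → ℝ} (hU : ConcaveOn ℝ univ U) {a b : ℝ}
    (hab : a < b) (hUab : U a < U b) : Tendsto U atBot atBot := by
  set s := (U b - U a) / (b - a)
  have hs : 0 < s := div_pos (sub_pos.2 hUab) (sub_pos.2 hab)
  have hline : Tendsto (fun x => s * x + (U a - s * a)) atBot atBot :=
    tendsto_atBot_add_const_right _ _ (tendsto_id.const_mul_atBot hs)
  refine tendsto_atBot_mono' _ ?_ hline
  filter_upwards [eventually_lt_atBot a] with x hx
  have hslope : s ≤ (U a - U x) / (a - x) :=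
    hU.slope_anti_adjacent (mem_univ x) (mem_univ b) hx hab
  have := (le_div_iff₀ (sub_pos.2 hx)).1 hslope
  linarith

theorem ConcaveOn.map_smul_le_of_one_le {E : Type*} [AddCommGroup E] [Module ℝ E]
    {f : E → ℝ} (hf : ConcaveOn ℝ univ f) (hf0 : 0 ≤ f 0) {lam : ℝ} (hlam : 1 ≤ lam) (x : E) :
    f (lam • x) ≤ lam * f x := by
  have hlam0 : 0 < lam := one_pos.trans_le hlam
  have hx : lam⁻¹ • (lam • x) + (1 - lam⁻¹) • (0 : E) = x := by
    rw [smul_smul, inv_mul_cancel₀ hlam0.ne', one_smul, smul_zero, add_zero]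
  have h := hf.2 (mem_univ (lam • x)) (mem_univ 0) (inv_nonneg.2 hlam0.le)
    (sub_nonneg.2 (inv_le_one_of_one_le₀ hlam)) (add_sub_cancel _ _)
  rw [hx, smul_eq_mul, smul_eq_mul] at h
  have h' := mul_le_mul_of_nonneg_left h hlam0.le
  rw [mul_add, ← mul_assoc, mul_inv_cancel₀ hlam0.ne', one_mul, ← mul_assoc, mul_sub, mul_one,
    mul_inv_cancel₀ hlam0.ne'] at h'
  linarith [mul_nonneg (sub_nonneg.2 hlam) hf0]

theorem hasDerivAt_rpow_neg_mul {U : ℝ → ℝ} {γ y : ℝ} (hy : 0 < y) (hU : DifferentiableAt ℝ U y) :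
    HasDerivAt (fun z => z ^ (-γ) * U z) (y ^ (-γ - 1) * (y * deriv U y - γ * U y)) y := by
  refine ((Real.hasDerivAt_rpow_const (Or.inl hy.ne')).mul hU.hasDerivAt).congr_deriv ?_
  rw [show y ^ (-γ) = y ^ (-γ - 1) * y by rw [← Real.rpow_add_one hy.ne']; norm_num]
  ring

theorem antitoneOn_rpow_neg_mul_of_elasticity_le {U : ℝ → ℝ} (hU : Differentiable ℝ U)
    {γ xbar : ℝ} (hxbar : 0 < xbar) (hrat : ∀ y, xbar ≤ y → y * deriv U y ≤ γ * U y) :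
    AntitoneOn (fun y => y ^ (-γ) * U y) (Ici xbar) := by
  refine antitoneOn_of_hasDerivWithinAt_nonpos (convex_Ici xbar)
    (fun y hy => (hasDerivAt_rpow_neg_mul (hxbar.trans_le hy) (hU y)).continuousAt
      |>.continuousWithinAt)
    (fun y hy => (hasDerivAt_rpow_neg_mul (hxbar.trans_le (interior_subset hy)) (hU y))
      |>.hasDerivWithinAt) fun y hy => ?_
  have hy : xbar ≤ y := interior_subset hy
  exact mul_nonpos_of_nonneg_of_nonpos (Real.rpow_nonneg (hxbar.le.trans hy) _)
    (sub_nonpos.2 (hrat y hy))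

theorem le_rpow_mul_of_elasticity_le {U : ℝ → ℝ} (hU : Differentiable ℝ U)
    {γ xbar : ℝ} (hxbar : 0 < xbar) (hrat : ∀ y, xbar ≤ y → y * deriv U y ≤ γ * U y)
    {x lam : ℝ} (hx : xbar ≤ x) (hlam : 1 ≤ lam) : U (lam * x) ≤ lam ^ γ * U x := by
  have hx0 : 0 < x := hxbar.trans_le hx
  have hlam0 : 0 < lam := one_pos.trans_le hlam
  have hlamx : x ≤ lam * x := le_mul_of_one_le_left hx0.le hlam
  have h := antitoneOn_rpow_neg_mul_of_elasticity_le hU hxbar hrat hx (hx.trans hlamx) hlamx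
  simp only [Real.mul_rpow hlam0.le hx0.le, Real.rpow_neg hlam0.le, Real.rpow_neg hx0.le] at h
  calc U (lam * x) = lam ^ γ * x ^ γ * ((lam ^ γ)⁻¹ * (x ^ γ)⁻¹ * U (lam * x)) := by
        field_simp
    _ ≤ lam ^ γ * x ^ γ * ((x ^ γ)⁻¹ * U x) := by gcongr
    _ = lam ^ γ * U x := by field_simp

theorem le_rpow_mul_add_of_elasticity_le {U : ℝ → ℝ} (hconc : ConcaveOn ℝ univ U)
    (hmono : Monotone U) (hU : Differentiable ℝ U) {γ xbar : ℝ} (hγ : γ ≤ 1) (hxbar : 0 < xbar)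
    (hrat : ∀ y, xbar ≤ y → y * deriv U y ≤ γ * U y) {lam : ℝ} (hlam : 1 ≤ lam) (x : ℝ) :
    U (lam * x) ≤ lam ^ γ * (U x + (max (U xbar) 0 + max (-U 0) 0)) := by
  set m := max (-U 0) 0
  have hm : -U 0 ≤ m ∧ 0 ≤ m := ⟨le_max_left _ _, le_max_right _ _⟩
  have hC : U xbar ≤ max (U xbar) 0 ∧ 0 ≤ max (U xbar) 0 := ⟨le_max_left _ _, le_max_right _ _⟩
  rcases le_or_gt (U x + m) 0 with hneg | hpos
  · have hshift : ConcaveOn ℝ univ (fun y => U y + m) := hconc.add_const m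
    have hlin : U (lam * x) + m ≤ lam * (U x + m) :=
      hshift.map_smul_le_of_one_le (by linarith [hm.1]) hlam x
    have hγlam : lam ^ γ ≤ lam := by
      simpa using Real.rpow_le_rpow_of_exponent_le hlam hγ
    calc U (lam * x) ≤ lam * (U x + m) := by linarith [hm.2]
      _ ≤ lam ^ γ * (U x + m) := mul_le_mul_of_nonpos_right hγlam hneg
      _ ≤ lam ^ γ * (U x + (max (U xbar) 0 + m)) := by gcongr; linarith [hC.2, hm.2]
  rcases le_or_gt xbar x with hx | hx
  · calc U (lam * x) ≤ lam ^ γ * U x := le_rpow_mul_of_elasticity_le hU hxbar hrat hx hlam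
      _ ≤ lam ^ γ * (U x + (max (U xbar) 0 + m)) := by gcongr; linarith [hC.2, hm.2]
  · calc U (lam * x) ≤ U (lam * xbar) := hmono (by gcongr)
      _ ≤ lam ^ γ * U xbar := le_rpow_mul_of_elasticity_le hU hxbar hrat le_rfl hlam
      _ ≤ lam ^ γ * (U x + (max (U xbar) 0 + m)) := by gcongr; linarith [hC.1]

theorem AE_plus_growth_general (U : ℝ → ℝ) (hconc : ConcaveOn ℝ Set.univ U) (hmono : Monotone U)
    (hnonconst : ∃ a b : ℝ, U a ≠ U b) (hC1 : ContDiff ℝ 1 U)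
    (hpos : ∃ x₀ : ℝ, 0 < U x₀)
    (γ : ℝ) (hγ1 : γ < 1) (hγ2 : AEplus U < (γ : EReal)) :
    (∃ x' xbar : ℝ, x' < 0 ∧ 0 < xbar ∧ U x' < 0 ∧ 0 < U xbar ∧
      ∀ x, xbar ≤ x → x * deriv U x / U x < γ) ∧
    (∀ x' xbar : ℝ, x' < 0 → 0 < xbar → U x' < 0 → 0 < U xbar →
      (∀ x, xbar ≤ x → x * deriv U x / U x < γ) →
      ∀ lam : ℝ, 1 ≤ lam → ∀ x : ℝ,
        U (lam * x) ≤ lam ^ γ * (U x + (max (U xbar) 0 + max (-U x') 0 + max (-U 0) 0))) := by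
  constructor
  · obtain ⟨a, b, hab⟩ := hnonconst
    have hbot : Tendsto U atBot atBot := by
      rcases hab.lt_or_gt with h | h <;> exact hconc.tendsto_atBot_atBot (hmono.reflect_lt h) h
    obtain ⟨x', hx'0, hUx'⟩ :=
      ((eventually_lt_atBot 0).and (hbot.eventually_lt_atBot 0)).exists
    obtain ⟨x₀, hx₀⟩ := hpos
    obtain ⟨N, hN⟩ := eventually_atTop.1 (eventually_lt_of_limsup_lt hγ2)
    refine ⟨x', max N (max x₀ 1), hx'0, by positivity, hUx',
      hx₀.trans_le (hmono (le_max_of_le_right (le_max_left _ _))),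
      fun x hx => EReal.coe_lt_coe_iff.1 (hN x (le_of_max_le_left hx))⟩
  · intro x' xbar _ hxbar _ hUxbar hrat lam hlam x
    have hrat' : ∀ y, xbar ≤ y → y * deriv U y ≤ γ * U y := fun y hy =>
      ((div_lt_iff₀ (hUxbar.trans_le (hmono hy))).1 (hrat y hy)).le
    calc U (lam * x) ≤ lam ^ γ * (U x + (max (U xbar) 0 + max (-U 0) 0)) :=
          le_rpow_mul_add_of_elasticity_le hconc hmono (hC1.differentiable one_ne_zero) hγ1.le
            hxbar hrat' hlam x
      _ ≤ _ := by gcongr; linarith [le_max_right (-U x') 0]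

/-- Let `U : ℝ → ℝ` be concave, nondecreasing, non-constant and continuously
differentiable with `AE₊(U) < 1` and `U x₀ > 0` for some `x₀`, and let `γ` satisfy `γ < 1` and
`AE₊(U) < (γ : EReal)`. Then there are `x' < 0` and `x̄ > 0` with `U x' < 0`, `U x̄ > 0` and
`x·U'(x)/U(x) < γ` for all `x ≥ x̄`; and for any such `x'`, `x̄`, with
`C := (U x̄)⁺ + (U x')⁻ + (U 0)⁻` one has `U (λ·x) ≤ λ^γ · (U x + C)` for every `λ ≥ 1`
and every `x`. -/
theorem AE_plus_growth (U : ℝ → ℝ) (hconc : ConcaveOn ℝ Set.univ U) (hmono : Monotone U)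
    (hnonconst : ∃ a b : ℝ, U a ≠ U b) (hC1 : ContDiff ℝ 1 U)
    (hAE : AEplus U < 1) (hpos : ∃ x₀ : ℝ, 0 < U x₀)
    (γ : ℝ) (hγ1 : γ < 1) (hγ2 : AEplus U < (γ : EReal)) :
    (∃ x' xbar : ℝ, x' < 0 ∧ 0 < xbar ∧ U x' < 0 ∧ 0 < U xbar ∧
      ∀ x, xbar ≤ x → x * deriv U x / U x < γ) ∧
    (∀ x' xbar : ℝ, x' < 0 → 0 < xbar → U x' < 0 → 0 < U xbar →
      (∀ x, xbar ≤ x → x * deriv U x / U x < γ) →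
      ∀ lam : ℝ, 1 ≤ lam → ∀ x : ℝ,
        U (lam * x) ≤ lam ^ γ * (U x + (max (U xbar) 0 + max (-U x') 0 + max (-U 0) 0))) :=
  AE_plus_growth_general U hconc hmono hnonconst hC1 hpos γ hγ1 hγ2
end

section
/- For every real constant c there exists β ∈ (0,1] with the following property: every Borel probability measure μ on ℝ such that the function x ↦ exp(|x|) is μ-integrable with ∫ exp(|x|) dμ(x) ≤ c, ∫ x dμ(x) = 0 and ∫ x² dμ(x) = 1, satisfies μ({x : x < −β}) ≥ β and μ({x : x > β}) ≥ β. -/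
/-!
Since `x⁴ ≤ 24 exp |x|`, the bound `x² ≤ M |x| + 24 exp |x| / M²` holds pointwise; with
`48 ∫ exp |X| ≤ M²` it shows that `∫ |X| ≥ 1 / (2M)`, i.e. (as `∫ X = 0`) that the negative part
of `X` carries mass. That mass cannot sit in `[-β, 0]` for small `β`, and by AM-GM its part on
`A = {X < -β}` is at most `ε ∫ X² + μ A / (4ε)`, which forces `μ A ≥ 1 / (32 M²)`.
The right tail is the left tail of `-X`.
-/

open MeasureTheory
open scoped ENNReal Nat

lemma pow_abs_le_factorial_mul_exp_abs (x : ℝ) (n : ℕ) : |x| ^ n ≤ n ! * Real.exp |x| := by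
  have h := Real.pow_div_factorial_le_exp (x := |x|) (abs_nonneg x) n
  rwa [div_le_iff₀' (by positivity)] at h

lemma sq_le_mul_abs_add_exp_abs_div_sq {M : ℝ} (hM : 0 < M) (x : ℝ) :
    x ^ 2 ≤ M * |x| + 24 / M ^ 2 * Real.exp |x| := by
  have h4 : |x| ^ 4 ≤ 24 * Real.exp |x| := by
    simpa [Nat.factorial] using pow_abs_le_factorial_mul_exp_abs x 4
  have hexp : 0 ≤ 24 / M ^ 2 * Real.exp |x| := by positivity
  rw [← sq_abs]
  rcases le_total |x| M with hxM | hMx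
  · nlinarith [abs_nonneg x]
  · have hM2 : M ^ 2 ≤ |x| ^ 2 := pow_le_pow_left₀ hM.le hMx 2
    have : |x| ^ 2 * M ^ 2 ≤ 24 * Real.exp |x| := by nlinarith [sq_nonneg |x|]
    have : |x| ^ 2 ≤ 24 / M ^ 2 * Real.exp |x| := by
      rwa [div_mul_eq_mul_div, le_div_iff₀ (by positivity)]
    nlinarith [abs_nonneg x]

lemma abs_sub_le_add_indicator {β ε : ℝ} (hβ : 0 ≤ β) (hε : 0 < ε) (x : ℝ) :
    |x| - x ≤ 2 * β + 2 * ε * x ^ 2 + {y : ℝ | y < -β}.indicator (fun _ => 1 / (2 * ε)) x := by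
  by_cases hx : x < -β
  · have amgm : 0 ≤ 2 * ε * (x + 1 / (2 * ε)) ^ 2 := by positivity
    have : 2 * ε * (x + 1 / (2 * ε)) ^ 2 = 2 * ε * x ^ 2 + 2 * x + 1 / (2 * ε) := by
      field_simp; ring
    rw [Set.indicator_of_mem (s := {y : ℝ | y < -β}) hx, abs_of_neg (by linarith)]
    linarith
  · rw [Set.indicator_of_notMem (s := {y : ℝ | y < -β}) hx]
    cases abs_cases x <;> nlinarith

variable {Ω : Type*} [MeasurableSpace Ω] {μ : Measure Ω} {X : Ω → ℝ}

lemma integrable_pow_of_integrable_exp_abs (hX : AEStronglyMeasurable X μ)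
    (hexp : Integrable (fun ω => Real.exp |X ω|) μ) (n : ℕ) :
    Integrable (fun ω => X ω ^ n) μ :=
  (hexp.const_mul (n ! : ℝ)).mono (hX.pow n) <| ae_of_all _ fun ω => by
    simpa [abs_mul, abs_of_pos (Real.exp_pos _)] using pow_abs_le_factorial_mul_exp_abs (X ω) n

lemma integral_sq_le_add_measureReal_lt_neg [IsFiniteMeasure μ] (hX : Measurable X)
    (hexp : Integrable (fun ω => Real.exp |X ω|) μ) {β ε M : ℝ} (hβ : 0 ≤ β) (hε : 0 < ε)
    (hM : 0 < M) :
    ∫ ω, X ω ^ 2 ∂μ ≤ M * ∫ ω, X ω ∂μ + μ.real Set.univ * (2 * M * β)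
      + 2 * M * ε * ∫ ω, X ω ^ 2 ∂μ + μ.real {ω | X ω < -β} * (M / (2 * ε))
      + 24 / M ^ 2 * ∫ ω, Real.exp |X ω| ∂μ := by
  set A := {ω | X ω < -β}
  have hA : MeasurableSet A := measurableSet_lt hX measurable_const
  have hX1 : Integrable X μ := by
    simpa using integrable_pow_of_integrable_exp_abs hX.aestronglyMeasurable hexp 1
  have hX2 := integrable_pow_of_integrable_exp_abs hX.aestronglyMeasurable hexp 2
  have hbound : ∀ ω, X ω ^ 2 ≤ M * X ω + 2 * M * β + 2 * M * ε * X ω ^ 2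
      + A.indicator (fun _ => M / (2 * ε)) ω + 24 / M ^ 2 * Real.exp |X ω| := by
    intro ω
    have h1 := sq_le_mul_abs_add_exp_abs_div_sq hM (X ω)
    have h2 := mul_le_mul_of_nonneg_left (abs_sub_le_add_indicator hβ hε (X ω)) hM.le
    have h3 : A.indicator (fun _ => M / (2 * ε)) ω
        = M * {y : ℝ | y < -β}.indicator (fun _ => 1 / (2 * ε)) (X ω) := by
      by_cases h : X ω < -β <;> simp [A, h, Set.indicator, div_eq_mul_inv]
    rw [h3]
    linarith
  have hint := integral_mono hX2 (by fun_prop) hbound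
  rw [integral_add, integral_add, integral_add, integral_add, integral_const_mul, integral_const,
    integral_const_mul, integral_indicator_const _ hA, integral_const_mul] at hint
  · simpa only [smul_eq_mul] using hint
  all_goals fun_prop

lemma ofReal_le_measure_lt_neg [IsProbabilityMeasure μ] (hX : Measurable X)
    (hexp : Integrable (fun ω => Real.exp |X ω|) μ) (hmean : ∫ ω, X ω ∂μ = 0)
    (hvar : ∫ ω, X ω ^ 2 ∂μ = 1) {M : ℝ} (hM : 1 ≤ M)
    (hexpM : 48 * ∫ ω, Real.exp |X ω| ∂μ ≤ M ^ 2) :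
    ENNReal.ofReal (1 / (32 * M ^ 2)) ≤ μ {ω | X ω < -(1 / (32 * M ^ 2))} := by
  have hM0 : 0 < M := by linarith
  set β := 1 / (32 * M ^ 2) with hβ
  set ε := 1 / (16 * M) with hε
  have hint := integral_sq_le_add_measureReal_lt_neg (μ := μ) hX hexp (by positivity : 0 ≤ β)
    (by positivity : 0 < ε) hM0
  rw [hmean, hvar, probReal_univ, mul_zero, zero_add, one_mul, mul_one] at hint
  have hβM : 2 * M * β ≤ 1 / 16 := by
    rw [hβ, mul_one_div, div_le_div_iff₀ (by positivity) (by norm_num)]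
    nlinarith
  have hεM : 2 * M * ε = 1 / 8 := by rw [hε]; field_simp; norm_num
  have hεM' : M / (2 * ε) = 8 * M ^ 2 := by rw [hε]; field_simp; norm_num
  have hexpM' : 24 / M ^ 2 * ∫ ω, Real.exp |X ω| ∂μ ≤ 1 / 2 := by
    rw [div_mul_eq_mul_div, div_le_iff₀ (by positivity)]
    linarith
  rw [hεM, hεM'] at hint
  refine ENNReal.ofReal_le_of_le_toReal ?_
  rw [← measureReal_def, hβ, div_le_iff₀ (by positivity)]
  linarith

/-- For every real `c` there exists `β ∈ (0,1]` such that every Borel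
probability measure `μ` on `ℝ` with `x ↦ exp |x|` integrable, `∫ exp |x| dμ ≤ c`,
`∫ x dμ = 0` and `∫ x² dμ = 1` satisfies `μ {x < −β} ≥ β` and `μ {x > β} ≥ β`. -/
theorem exists_uniform_mass_bound (c : ℝ) :
    ∃ β : ℝ, 0 < β ∧ β ≤ 1 ∧
      ∀ μ : Measure ℝ, IsProbabilityMeasure μ →
        Integrable (fun x : ℝ => Real.exp |x|) μ →
        (∫ x, Real.exp |x| ∂μ) ≤ c →
        (∫ x, x ∂μ) = 0 →
        (∫ x, x ^ 2 ∂μ) = 1 →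
        ENNReal.ofReal β ≤ μ {x : ℝ | x < -β} ∧ ENNReal.ofReal β ≤ μ {x : ℝ | β < x} := by
  set M := 48 * max c 1
  have hM : 1 ≤ M := by linarith [le_max_right c 1]
  refine ⟨1 / (32 * M ^ 2), by positivity, ?_, fun μ _ hexp hc hmean hvar => ?_⟩
  · rw [div_le_one (by positivity)]
    nlinarith
  have hexpM : 48 * ∫ x, Real.exp |x| ∂μ ≤ M ^ 2 := by nlinarith [le_max_left c 1]
  constructor
  · exact ofReal_le_measure_lt_neg measurable_id hexp hmean hvar hM hexpM
  · simpa using ofReal_le_measure_lt_neg (X := fun x => -x) measurable_neg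
      (by simpa using hexp) (by rw [integral_neg, hmean, neg_zero]) (by simpa using hvar) hM
      (by simpa using hexpM)
end

section
/- Let (Ω, 𝒢) be a measurable space, 𝒬 a nonempty set of probability measures on Ω, Y : Ω → ℝ^d a measurable map, and V : Ω × ℝ → EReal a jointly measurable function such that V(ω, ·) is nondecreasing for every ω ∈ Ω. If for every rational x and every h ∈ ℚ^d one has sup_{p ∈ 𝒬} ∫⁻_Ω (V(ω, x + ⟨h, Y(ω)⟩))⁻ dp(ω) < ∞, then the same finiteness holds for every x ∈ ℝ and every h ∈ ℝ^d. -/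
open MeasureTheory Set
open scoped ENNReal

/-- The `[0,∞]`-valued negative part `a⁻ = max(−a,0)` of `a : EReal`. -/
noncomputable def eNeg (a : EReal) : ℝ≥0∞ := (max (-a) 0).abs

/-- A rational vector viewed as a point of `ℝ^d`. -/
def ratVec {d : ℕ} (h : Fin d → ℚ) : EuclideanSpace ℝ (Fin d) := WithLp.toLp 2 (fun i => (h i : ℝ))

/-!
Round `x` down to `⌊x⌋` and each coordinate `h i` down or up according to the sign of `Y ω i`:
this yields one of `2^d` rational pairs `(q, k)` with `q + ⟪k, Y ω⟫ ≤ x + ⟪h, Y ω⟫`. Since `V ω` is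
nondecreasing and `a ↦ a⁻` is antitone, the integrand at `(x, h)` is pointwise dominated by one
of finitely many rational integrands, hence by their sum, whose supremum over `𝒬` is finite.
-/

lemma eNeg_eq_toENNReal_neg (a : EReal) : eNeg a = (-a).toENNReal := by
  induction a with
  | bot => simp [eNeg]
  | top => simp [eNeg]
  | coe x =>
    rw [eNeg, ← EReal.coe_neg, ← EReal.coe_zero, ← EReal.coe_strictMono.monotone.map_max,
      EReal.abs_def, EReal.real_coe_toENNReal, abs_of_nonneg (le_max_right _ _)]
    simp

lemma eNeg_antitone : Antitone eNeg := fun a b hab => by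
  simpa only [eNeg_eq_toENNReal_neg] using
    EReal.toENNReal_le_toENNReal (EReal.neg_le_neg_iff.mpr hab)

lemma biSup_lintegral_lt_top_of_forall_exists_le {Ω ι : Type*} [MeasurableSpace Ω] [Fintype ι]
    {Q : Set (Measure Ω)} {f : Ω → ℝ≥0∞} {g : ι → Ω → ℝ≥0∞} (hg : ∀ i, Measurable (g i))
    (hfg : ∀ ω, ∃ i, f ω ≤ g i ω) (hfin : ∀ i, ⨆ p ∈ Q, ∫⁻ ω, g i ω ∂p < ∞) :
    ⨆ p ∈ Q, ∫⁻ ω, f ω ∂p < ∞ := by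
  have hf_le_sum : ∀ ω, f ω ≤ ∑ i, g i ω := fun ω => by
    obtain ⟨i, hi⟩ := hfg ω
    exact hi.trans (Finset.single_le_sum (f := fun j => g j ω) (fun j _ => zero_le)
      (Finset.mem_univ i))
  refine (iSup₂_le fun p hp => ?_).trans_lt
    (ENNReal.sum_lt_top.mpr fun i (_ : i ∈ Finset.univ) => hfin i)
  calc ∫⁻ ω, f ω ∂p ≤ ∫⁻ ω, ∑ i, g i ω ∂p := lintegral_mono hf_le_sum
    _ = ∑ i, ∫⁻ ω, g i ω ∂p := lintegral_finsetSum _ fun i _ => hg i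
    _ ≤ ∑ i, ⨆ p ∈ Q, ∫⁻ ω, g i ω ∂p :=
      Finset.sum_le_sum fun i _ => le_biSup (fun p => ∫⁻ ω, g i ω ∂p) hp

noncomputable def roundVec {d : ℕ} (h : EuclideanSpace ℝ (Fin d)) (s : Fin d → Bool) :
    Fin d → ℚ :=
  fun i => if s i then ⌈h i⌉ else ⌊h i⌋

lemma exists_inner_ratVec_roundVec_le {d : ℕ} (h y : EuclideanSpace ℝ (Fin d)) :
    ∃ s, inner ℝ (ratVec (roundVec h s)) y ≤ inner ℝ h y := by
  refine ⟨fun i => decide (y i < 0), ?_⟩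
  simp only [PiLp.inner_apply, RCLike.inner_apply, conj_trivial]
  refine Finset.sum_le_sum fun i _ => ?_
  by_cases hyi : y i < 0
  · simpa [ratVec, roundVec, hyi] using mul_le_mul_of_nonpos_left (Int.le_ceil (h i)) hyi.le
  · simpa [ratVec, roundVec, hyi] using
      mul_le_mul_of_nonneg_left (Int.floor_le (h i)) (not_lt.mp hyi)

theorem neg_part_sup_lintegral_finite_of_rat_general {Ω : Type*} [MeasurableSpace Ω] {d : ℕ}
    (Q : Set (Measure Ω))
    (Y : Ω → EuclideanSpace ℝ (Fin d)) (hY : Measurable Y)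
    (V : Ω → ℝ → EReal) (hVmeas : Measurable (Function.uncurry V))
    (hVmono : ∀ ω, Monotone (V ω))
    (hfin : ∀ x : ℚ, ∀ h : Fin d → ℚ,
      (⨆ p ∈ Q, ∫⁻ ω, eNeg (V ω ((x : ℝ) + (inner ℝ (ratVec h) (Y ω) : ℝ))) ∂p) < ⊤) :
    ∀ x : ℝ, ∀ h : EuclideanSpace ℝ (Fin d),
      (⨆ p ∈ Q, ∫⁻ ω, eNeg (V ω (x + (inner ℝ h (Y ω) : ℝ))) ∂p) < ⊤ := by
  intro x h
  refine biSup_lintegral_lt_top_of_forall_exists_le (fun s => ?_) (fun ω => ?_)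
    (fun s => hfin ⌊x⌋ (roundVec h s))
  · refine eNeg_antitone.measurable.comp (hVmeas.comp (measurable_id.prodMk ?_))
    exact measurable_const.add ((continuous_const.inner continuous_id).measurable.comp hY)
  · obtain ⟨s, hs⟩ := exists_inner_ratVec_roundVec_le h (Y ω)
    refine ⟨s, eNeg_antitone (hVmono ω (add_le_add ?_ hs))⟩
    exact_mod_cast Int.floor_le x

/-- If `V(ω,·)` is nondecreasing and
`sup_{p ∈ 𝒬} ∫⁻ (V(ω, x + ⟨h, Y ω⟩))⁻ dp < ∞` for every rational `x` and `h ∈ ℚ^d`, then the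
same finiteness holds for every real `x` and every `h ∈ ℝ^d`. -/
theorem neg_part_sup_lintegral_finite_of_rat {Ω : Type*} [MeasurableSpace Ω] {d : ℕ}
    (Q : Set (Measure Ω)) (hQ : Q.Nonempty) (hQprob : ∀ p ∈ Q, IsProbabilityMeasure p)
    (Y : Ω → EuclideanSpace ℝ (Fin d)) (hY : Measurable Y)
    (V : Ω → ℝ → EReal) (hVmeas : Measurable (Function.uncurry V))
    (hVmono : ∀ ω, Monotone (V ω))
    (hfin : ∀ x : ℚ, ∀ h : Fin d → ℚ,
      (⨆ p ∈ Q, ∫⁻ ω, eNeg (V ω ((x : ℝ) + (inner ℝ (ratVec h) (Y ω) : ℝ))) ∂p) < ⊤) :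
    ∀ x : ℝ, ∀ h : EuclideanSpace ℝ (Fin d),
      (⨆ p ∈ Q, ∫⁻ ω, eNeg (V ω (x + (inner ℝ h (Y ω) : ℝ))) ∂p) < ⊤ :=
  neg_part_sup_lintegral_finite_of_rat_general Q Y hY V hVmeas hVmono hfin
end

section
/- Let (Ω, 𝒢) be a measurable space, p* a probability measure on Ω, Y : Ω → ℝ^d a measurable map, and V : Ω × ℝ → EReal jointly measurable with V(ω, ·) nondecreasing for every ω. Let γ ∈ (0,1] and let C : Ω → [0,∞] be measurable with c* := ∫⁻ C dp* < ∞, and assume that for every ω with C(ω) < ∞, every λ ≥ 1 and every x ∈ ℝ one has V(ω, λ·x) ≤ λ^γ·(V(ω,x) + C(ω)) in EReal. Let α* ∈ (0,1], let h ∈ ℝ^d with h ≠ 0 satisfy p*({ω : ⟨h, Y(ω)⟩ < −α*·|h|}) ≥ α*, and let n₀ ≥ 1 be an integer with p*({ω : V(ω, −n₀) ≤ −(1 + 2c*/α*)}) ≥ 1 − α*/2. Then for every x ≤ −n₀: ∫⁻ (V(ω, x + ⟨h, Y(ω)⟩))⁻ dp*(ω) ≥ (|x|/n₀)^γ · α*/2.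 -/
open MeasureTheory Set
open scoped ENNReal

/-! Let `K = 1 + 2c*/α*`. On the event `{⟨h, Y⟩ < −α*|h|} ∩ {V(·, −n₀) ≤ −K}`, whose probability is at
least `α* + (1 − α*/2) − 1 = α*/2`, monotonicity and the growth bound with `λ = |x|/n₀` give
`V(ω, x + ⟨h, Y ω⟩) ≤ V(ω, x) ≤ λ^γ (C ω − K)`. Integrating the negative part over that event yields
at least `λ^γ (K α*/2 − c*) = λ^γ α*/2`. -/

lemma eNeg_coe (r : ℝ) : eNeg r = ENNReal.ofReal (-r) := by
  rw [eNeg, ← EReal.coe_neg, ← EReal.coe_zero, ← EReal.coe_strictMono.monotone.map_max,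
    EReal.abs_def, abs_of_nonneg (le_max_right _ _), ENNReal.ofReal_max, ENNReal.ofReal_zero,
    max_eq_left zero_le]

lemma ofReal_neg_le_eNeg {a : EReal} {r : ℝ} (ha : a ≤ r) : ENNReal.ofReal (-r) ≤ eNeg a := by
  induction a using EReal.rec with
  | bot => simp [eNeg]
  | coe s => exact eNeg_coe s ▸ ENNReal.ofReal_le_ofReal (neg_le_neg (mod_cast ha))
  | top => simp at ha

lemma ofReal_add_sub_one_le_measure_inter {Ω : Type*} [MeasurableSpace Ω] {μ : Measure Ω}
    [IsProbabilityMeasure μ] {A B : Set Ω} (hB : MeasurableSet B) {a b : ℝ}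
    (ha : ENNReal.ofReal a ≤ μ A) (hb : ENNReal.ofReal b ≤ μ B) :
    ENNReal.ofReal (a + b - 1) ≤ μ (A ∩ B) := by
  rw [ENNReal.ofReal_sub _ zero_le_one, ENNReal.ofReal_one, tsub_le_iff_left]
  calc ENNReal.ofReal (a + b) ≤ μ A + μ B := ENNReal.ofReal_add_le.trans (add_le_add ha hb)
    _ = μ (A ∪ B) + μ (A ∩ B) := (measure_union_add_inter A hB).symm
    _ ≤ 1 + μ (A ∩ B) := by gcongr; exact prob_le_one

section

variable {α : Type*} [MeasurableSpace α] {μ : Measure α} {f g : α → ℝ≥0∞}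

lemma mul_measure_sub_lintegral_le_setLIntegral_sub (hg : AEMeasurable g μ) (c : ℝ≥0∞)
    (s : Set α) : c * μ s - ∫⁻ x, g x ∂μ ≤ ∫⁻ x in s, (c - g x) ∂μ := by
  rw [tsub_le_iff_right]
  calc c * μ s = ∫⁻ _ in s, c ∂μ := (setLIntegral_const s c).symm
    _ ≤ ∫⁻ x in s, (c - g x + g x) ∂μ := lintegral_mono fun x => le_tsub_add
    _ = ∫⁻ x in s, (c - g x) ∂μ + ∫⁻ x in s, g x ∂μ := lintegral_add_right' _ hg.restrict
    _ ≤ ∫⁻ x in s, (c - g x) ∂μ + ∫⁻ x, g x ∂μ :=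
        add_le_add le_rfl (setLIntegral_le_lintegral s g)

lemma mul_sub_lintegral_le_lintegral_of_le_on (hg : AEMeasurable g μ) {s : Set α}
    (hs : MeasurableSet s) {a c : ℝ≥0∞} (hfg : ∀ x ∈ s, a * (c - g x) ≤ f x) :
    a * (c * μ s - ∫⁻ x, g x ∂μ) ≤ ∫⁻ x, f x ∂μ :=
  calc a * (c * μ s - ∫⁻ x, g x ∂μ) ≤ a * ∫⁻ x in s, (c - g x) ∂μ := by
        gcongr
        exact mul_measure_sub_lintegral_le_setLIntegral_sub hg c s
    _ ≤ ∫⁻ x in s, a * (c - g x) ∂μ := lintegral_const_mul_le a _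
    _ ≤ ∫⁻ x in s, f x ∂μ := setLIntegral_mono' hs hfg
    _ ≤ ∫⁻ x, f x ∂μ := setLIntegral_le_lintegral s f

end

lemma ofReal_rpow_mul_sub_le_eNeg {v : ℝ → EReal} (hv : Monotone v) {γ : ℝ} {c : ℝ≥0∞}
    (hgrow : c < ⊤ → ∀ lam : ℝ, 1 ≤ lam → ∀ x : ℝ,
      v (lam * x) ≤ ((lam ^ γ : ℝ) : EReal) * (v x + (c : EReal)))
    {n K x y : ℝ} (hn : 0 < n) (hx : x ≤ -n) (hy : y ≤ 0) (hK : v (-n) ≤ ((-K : ℝ) : EReal)) :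
    ENNReal.ofReal ((|x| / n) ^ γ) * (ENNReal.ofReal K - c) ≤ eNeg (v (x + y)) := by
  rcases eq_top_or_lt_top c with rfl | hc
  · simp
  set lam := |x| / n
  have hlam : 1 ≤ lam := by
    rw [le_div_iff₀ hn, one_mul, abs_of_nonpos (by linarith)]; linarith
  have hlamx : lam * -n = x := by
    rw [mul_neg, div_mul_cancel₀ _ hn.ne', abs_of_nonpos (by linarith), neg_neg]
  have hlamγ : 0 ≤ lam ^ γ := Real.rpow_nonneg (by linarith) γ
  lift c to NNReal using hc.ne
  have hv_le : v (x + y) ≤ ((lam ^ γ * (c - K) : ℝ) : EReal) :=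
    calc v (x + y) ≤ v x := hv (by linarith)
      _ ≤ ((lam ^ γ : ℝ) : EReal) * (v (-n) + ((c : ℝ≥0∞) : EReal)) :=
          hlamx ▸ hgrow ENNReal.coe_lt_top lam hlam (-n)
      _ ≤ ((lam ^ γ : ℝ) : EReal) * ((-K : ℝ) + (c : ℝ)) := by
          gcongr
          exact (EReal.coe_nnreal_eq_coe_real c).le
      _ = ((lam ^ γ * (c - K) : ℝ) : EReal) := by norm_cast; ring_nf
  calc ENNReal.ofReal (lam ^ γ) * (ENNReal.ofReal K - c)
      = ENNReal.ofReal (-(lam ^ γ * (c - K))) := by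
        rw [← ENNReal.ofReal_coe_nnreal, ← ENNReal.ofReal_sub _ c.coe_nonneg,
          ← ENNReal.ofReal_mul hlamγ]
        ring_nf
    _ ≤ eNeg (v (x + y)) := ofReal_neg_le_eNeg hv_le

theorem neg_part_lintegral_lower_bound_general {Ω : Type*} [MeasurableSpace Ω] {d : ℕ}
    (p : Measure Ω) [IsProbabilityMeasure p]
    (Y : Ω → EuclideanSpace ℝ (Fin d)) (hY : Measurable Y)
    (V : Ω → ℝ → EReal) (hVmeas : Measurable (Function.uncurry V))
    (hVmono : ∀ ω, Monotone (V ω))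
    (γ : ℝ)
    (C : Ω → ℝ≥0∞) (hCmeas : Measurable C)
    (cstar : ℝ) (hcstar0 : 0 ≤ cstar) (hcstar : (∫⁻ ω, C ω ∂p) = ENNReal.ofReal cstar)
    (hgrow : ∀ ω, C ω < ⊤ → ∀ lam : ℝ, 1 ≤ lam → ∀ x : ℝ,
      V ω (lam * x) ≤ ((lam ^ γ : ℝ) : EReal) * (V ω x + (C ω : EReal)))
    (αstar : ℝ) (hα0 : 0 < αstar)
    (h : EuclideanSpace ℝ (Fin d))
    (hqNA : ENNReal.ofReal αstar ≤ p {ω | (inner ℝ h (Y ω) : ℝ) < -αstar * ‖h‖})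
    (n₀ : ℕ) (hn₀ : 1 ≤ n₀)
    (hneg : ENNReal.ofReal (1 - αstar / 2)
      ≤ p {ω | V ω (-(n₀ : ℝ)) ≤ ((-(1 + 2 * cstar / αstar) : ℝ) : EReal)}) :
    ∀ x : ℝ, x ≤ -(n₀ : ℝ) →
      ENNReal.ofReal ((|x| / n₀) ^ γ * αstar / 2)
        ≤ ∫⁻ ω, eNeg (V ω (x + (inner ℝ h (Y ω) : ℝ))) ∂p := by
  intro x hx
  set K : ℝ := 1 + 2 * cstar / αstar
  set A := {ω | (inner ℝ h (Y ω) : ℝ) < -αstar * ‖h‖}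
  set B := {ω | V ω (-(n₀ : ℝ)) ≤ ((-K : ℝ) : EReal)}
  have hB : MeasurableSet B :=
    (hVmeas.comp (measurable_id.prodMk measurable_const)) measurableSet_Iic
  have hAB : MeasurableSet (A ∩ B) :=
    (measurableSet_lt ((continuous_const.inner continuous_id).measurable.comp hY)
      measurable_const).inter hB
  have hpAB : ENNReal.ofReal (αstar / 2) ≤ p (A ∩ B) := by
    convert ofReal_add_sub_one_le_measure_inter hB hqNA hneg using 2; ring
  have hK : ENNReal.ofReal K * ENNReal.ofReal (αstar / 2) - ENNReal.ofReal cstar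
      = ENNReal.ofReal (αstar / 2) := by
    rw [← ENNReal.ofReal_mul (by positivity), ← ENNReal.ofReal_sub _ hcstar0]
    congr 1; simp only [K]; field_simp; ring
  calc ENNReal.ofReal ((|x| / n₀) ^ γ * αstar / 2)
      = ENNReal.ofReal ((|x| / n₀) ^ γ) *
          (ENNReal.ofReal K * ENNReal.ofReal (αstar / 2) - ENNReal.ofReal cstar) := by
        rw [hK, ← ENNReal.ofReal_mul (by positivity), mul_div_assoc]
    _ ≤ ENNReal.ofReal ((|x| / n₀) ^ γ) * (ENNReal.ofReal K * p (A ∩ B) - ∫⁻ ω, C ω ∂p) := by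
        rw [hcstar]; gcongr
    _ ≤ _ := mul_sub_lintegral_le_lintegral_of_le_on hCmeas.aemeasurable hAB
        fun ω ⟨hA, hB⟩ => ofReal_rpow_mul_sub_le_eNeg (hVmono ω) (hgrow ω)
          (by exact_mod_cast hn₀) hx (hA.le.trans (by nlinarith [norm_nonneg h])) hB

/-- Under the one-sided elasticity bound with exponent `γ ∈ (0,1]`, the
quantitative no-arbitrage bound for `h ≠ 0`, and the negativity bound at `−n₀`, for every
`x ≤ −n₀` one has `∫⁻ (V(ω, x + ⟨h, Y ω⟩))⁻ dp* ≥ (|x|/n₀)^γ · α*/2`. -/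
theorem neg_part_lintegral_lower_bound {Ω : Type*} [MeasurableSpace Ω] {d : ℕ}
    (p : Measure Ω) [IsProbabilityMeasure p]
    (Y : Ω → EuclideanSpace ℝ (Fin d)) (hY : Measurable Y)
    (V : Ω → ℝ → EReal) (hVmeas : Measurable (Function.uncurry V))
    (hVmono : ∀ ω, Monotone (V ω))
    (γ : ℝ) (hγ0 : 0 < γ) (hγ1 : γ ≤ 1)
    (C : Ω → ℝ≥0∞) (hCmeas : Measurable C)
    (cstar : ℝ) (hcstar0 : 0 ≤ cstar) (hcstar : (∫⁻ ω, C ω ∂p) = ENNReal.ofReal cstar)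
    (hgrow : ∀ ω, C ω < ⊤ → ∀ lam : ℝ, 1 ≤ lam → ∀ x : ℝ,
      V ω (lam * x) ≤ ((lam ^ γ : ℝ) : EReal) * (V ω x + (C ω : EReal)))
    (αstar : ℝ) (hα0 : 0 < αstar) (hα1 : αstar ≤ 1)
    (h : EuclideanSpace ℝ (Fin d)) (hh : h ≠ 0)
    (hqNA : ENNReal.ofReal αstar ≤ p {ω | (inner ℝ h (Y ω) : ℝ) < -αstar * ‖h‖})
    (n₀ : ℕ) (hn₀ : 1 ≤ n₀)
    (hneg : ENNReal.ofReal (1 - αstar / 2)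
      ≤ p {ω | V ω (-(n₀ : ℝ)) ≤ ((-(1 + 2 * cstar / αstar) : ℝ) : EReal)}) :
    ∀ x : ℝ, x ≤ -(n₀ : ℝ) →
      ENNReal.ofReal ((|x| / n₀) ^ γ * αstar / 2)
        ≤ ∫⁻ ω, eNeg (V ω (x + (inner ℝ h (Y ω) : ℝ))) ∂p :=
  neg_part_lintegral_lower_bound_general p Y hY V hVmeas hVmono γ C hCmeas cstar hcstar0 hcstar
    hgrow αstar hα0 h hqNA n₀ hn₀ hneg
end
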